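/- Let 𝔠 ⊆ R^{1×ℓ}⟨x,x*⟩ be a right chip space and Γ(𝔠) = {j ∈ {1,...,ℓ} : e_j ⊗ 1 ∈ 𝔠}. Then the left-module span R⟨x,x*⟩𝔠 equals the direct sum over j ∈ Γ(𝔠) of e_j ⊗ R⟨x,x*⟩. -/

import Mathlib

open scoped BigOperators

namespace NSS

/-- Words in the `2g` free letters `x_1,…,x_g,x_1^*,…,x_g^*`
(a letter is a pair of an index and a `Bool`: `false` = unstarred, `true` = starred). -/
abbrev Word (g : ℕ) := FreeMonoid (Fin g × Bool)

/-- The free `*`-algebra `ℝ⟨x,x*⟩`. -/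
abbrev NC (g : ℕ) := MonoidAlgebra ℝ (Word g)

/-- `ν × ℓ` matrices of noncommutative polynomials. -/
abbrev NCMat (g ν ℓ : ℕ) := Matrix (Fin ν) (Fin ℓ) (NC g)

/-- The involution on words: reverse the word and swap starred/unstarred letters. -/
def wordStar {g : ℕ} (w : Word g) : Word g :=
  FreeMonoid.ofList (((FreeMonoid.toList w).map (fun p => (p.1, !p.2))).reverse)

/-- The involution on `ℝ⟨x,x*⟩`. -/
noncomputable def ncStar {g : ℕ} (p : NC g) : NC g :=
  MonoidAlgebra.ofCoeff (Finsupp.mapDomain wordStar p.coeff)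

/-- The involution on matrix polynomials: transpose and apply `ncStar` entrywise. -/
noncomputable def matStar {g ν ℓ : ℕ} (p : NCMat g ν ℓ) : NCMat g ℓ ν :=
  Matrix.of fun i j => ncStar (p j i)

/-- The left action of a scalar polynomial on a matrix polynomial
(entrywise left multiplication, identifying `q` with `I ⊗ q`). -/
noncomputable def leftMul {g ν ℓ : ℕ} (q : NC g) (p : NCMat g ν ℓ) : NCMat g ν ℓ :=
  Matrix.of fun i j => q * p i j

/-- A constant real matrix, viewed as a matrix of noncommutative polynomials. -/
noncomputable def constMat {g m n : ℕ} (A : Matrix (Fin m) (Fin n) ℝ) : NCMat g m n :=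
  A.map (algebraMap ℝ (NC g))

/-- The space `ℝ^{ℓ×1}·I + I^*·ℝ^{1×ℓ}`. -/
noncomputable def realPart {g ℓ : ℕ} (I : Set (NCMat g 1 ℓ)) : Submodule ℝ (NCMat g ℓ ℓ) :=
  Submodule.span ℝ
    ({m | ∃ B : Matrix (Fin ℓ) (Fin 1) ℝ, ∃ a ∈ I, m = constMat B * a} ∪
     {m | ∃ B : Matrix (Fin 1) (Fin ℓ) ℝ, ∃ a ∈ I, m = matStar a * constMat B})

/-- Left `ℝ⟨x,x*⟩`-submodules of `ℝ^{1×ℓ}⟨x,x*⟩`. -/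
def IsLeftSubmodule {g ℓ : ℕ} (I : Set (NCMat g 1 ℓ)) : Prop :=
  0 ∈ I ∧ (∀ a b, a ∈ I → b ∈ I → a + b ∈ I) ∧
    (∀ (r : ℝ) a, a ∈ I → r • a ∈ I) ∧ ∀ (q : NC g) a, a ∈ I → leftMul q a ∈ I

/-- A left module `I` is *real* if any finite sum of hermitian squares lying in
`ℝ^{ℓ×1}·I + I^*·ℝ^{1×ℓ}` has all its terms in `I`. -/
def IsReal {g ℓ : ℕ} (I : Set (NCMat g 1 ℓ)) : Prop :=
  ∀ (n : ℕ) (p : Fin n → NCMat g 1 ℓ),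
    (∑ i, matStar (p i) * p i) ∈ realPart I → ∀ i, p i ∈ I

/-- The monomial `e_j ⊗ w ∈ ℝ^{1×ℓ}⟨x,x*⟩`. -/
noncomputable def rowMono {g ℓ : ℕ} (j : Fin ℓ) (w : Word g) : NCMat g 1 ℓ :=
  Matrix.of fun _ j' => if j' = j then (MonoidAlgebra.single w (1:ℝ) : NC g) else 0

/-- The left `ℝ⟨x,x*⟩`-submodule generated by a set. -/
def leftSpan {g ℓ : ℕ} (G : Set (NCMat g 1 ℓ)) : Set (NCMat g 1 ℓ) :=
  ⋂₀ {J | IsLeftSubmodule J ∧ G ⊆ J}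


/-- A set of row monomials (indexed by column and word) closed under right chips. -/
def IsRightChipClosed {g ℓ : ℕ} (S : Set (Fin ℓ × Word g)) : Prop :=
  ∀ (j : Fin ℓ) (u v : Word g), (j, u * v) ∈ S → (j, v) ∈ S

/-- The right chip space spanned by a chip-closed set of monomials. -/
noncomputable def chipSpace {g ℓ : ℕ} (S : Set (Fin ℓ × Word g)) :
    Submodule ℝ (NCMat g 1 ℓ) :=
  Submodule.span ℝ {p | ∃ m ∈ S, p = rowMono m.1 m.2}

/-- The space `ℝ⟨x,x*⟩·𝔠`. -/
noncomputable def algSpanChip {g ℓ : ℕ} (S : Set (Fin ℓ × Word g)) :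
    Submodule ℝ (NCMat g 1 ℓ) :=
  Submodule.span ℝ {p | ∃ q : NC g, ∃ c ∈ chipSpace S, p = leftMul q c}

/-- `Γ(𝔠)`: the set of columns `j` with `e_j ⊗ 1 ∈ 𝔠`. -/
def Gam {g ℓ : ℕ} (S : Set (Fin ℓ × Word g)) : Set (Fin ℓ) :=
  {j | (j, (1 : Word g)) ∈ S}

/-- The direct sum `⨁_{j ∈ Γ} e_j ⊗ ℝ⟨x,x*⟩`, i.e. row polynomials supported on
columns in `Γ`. -/
noncomputable def colSupported {g ℓ : ℕ} (Γ : Set (Fin ℓ)) : Submodule ℝ (NCMat g 1 ℓ) where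
  carrier := {p | ∀ j ∉ Γ, p 0 j = 0}
  add_mem' := by
    intro a b ha hb j hj
    simp [Matrix.add_apply, ha j hj, hb j hj]
  zero_mem' := by intro j hj; simp
  smul_mem' := by
    intro c a ha j hj
    simp [Matrix.smul_apply, ha j hj]

/-! Every monomial `e_j ⊗ w` of `𝔠` has the right chip `e_j ⊗ 1`, so `j ∈ Γ(𝔠)`; hence `𝔠`,
and with it `ℝ⟨x,x*⟩𝔠`, lives on the columns in `Γ(𝔠)`. Conversely, for `j ∈ Γ(𝔠)` the
generator `e_j ⊗ 1 ∈ 𝔠` gives `q·(e_j ⊗ 1) = e_j ⊗ q ∈ ℝ⟨x,x*⟩𝔠` for every `q`. -/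

section

variable {g ℓ : ℕ}

theorem leftMul_zero_left (p : NCMat g 1 ℓ) : leftMul 0 p = 0 := by
  ext i j
  simp [leftMul]

theorem leftMul_rowMono_one_apply (q : NC g) (j j' : Fin ℓ) :
    leftMul q (rowMono j 1) 0 j' = if j' = j then q else 0 := by
  simp [leftMul, rowMono, ← MonoidAlgebra.one_def]

theorem eq_sum_leftMul_rowMono_one (p : NCMat g 1 ℓ) :
    p = ∑ j, leftMul (p 0 j) (rowMono j 1) := by
  ext i j'
  fin_cases i
  simp [Matrix.sum_apply, leftMul_rowMono_one_apply]

theorem leftMul_mem_colSupported {Γ : Set (Fin ℓ)} (q : NC g) {c : NCMat g 1 ℓ}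
    (hc : c ∈ colSupported Γ) : leftMul q c ∈ colSupported Γ := fun j hj => by
  simp [leftMul, hc j hj]

theorem rowMono_mem_colSupported_Gam {S : Set (Fin ℓ × Word g)} (hS : IsRightChipClosed S)
    {j : Fin ℓ} {w : Word g} (hjw : (j, w) ∈ S) : rowMono j w ∈ colSupported (Gam S) := by
  have hj : j ∈ Gam S := hS j w 1 (by simpa using hjw)
  intro j' hj'
  simp [rowMono, show j' ≠ j from fun h => hj' (h ▸ hj)]

theorem chipSpace_le_colSupported_Gam {S : Set (Fin ℓ × Word g)} (hS : IsRightChipClosed S) :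
    chipSpace S ≤ colSupported (Gam S) := by
  rw [chipSpace, Submodule.span_le]
  rintro _ ⟨⟨j, w⟩, hjw, rfl⟩
  exact rowMono_mem_colSupported_Gam hS hjw

theorem algSpanChip_le_colSupported_Gam {S : Set (Fin ℓ × Word g)} (hS : IsRightChipClosed S) :
    algSpanChip S ≤ colSupported (Gam S) := by
  rw [algSpanChip, Submodule.span_le]
  rintro _ ⟨q, c, hc, rfl⟩
  exact leftMul_mem_colSupported q (chipSpace_le_colSupported_Gam hS hc)

theorem leftMul_rowMono_one_mem_algSpanChip {S : Set (Fin ℓ × Word g)} (q : NC g)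
    {j : Fin ℓ} (hj : j ∈ Gam S) : leftMul q (rowMono j 1) ∈ algSpanChip S :=
  Submodule.subset_span ⟨q, rowMono j 1, Submodule.subset_span ⟨(j, 1), hj, rfl⟩, rfl⟩

theorem colSupported_Gam_le_algSpanChip (S : Set (Fin ℓ × Word g)) :
    colSupported (Gam S) ≤ algSpanChip S := by
  intro p hp
  rw [eq_sum_leftMul_rowMono_one p]
  refine Submodule.sum_mem _ fun j _ => ?_
  by_cases hj : j ∈ Gam S
  · exact leftMul_rowMono_one_mem_algSpanChip (p 0 j) hj
  · rw [hp j hj, leftMul_zero_left]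
    exact zero_mem _

end

/-- for a right chip space `𝔠`, the left-module span `ℝ⟨x,x*⟩𝔠` equals
`⨁_{j ∈ Γ(𝔠)} e_j ⊗ ℝ⟨x,x*⟩`. -/
theorem stmt8 {g ℓ : ℕ} (S : Set (Fin ℓ × Word g)) (hS : IsRightChipClosed S) :
    algSpanChip S = colSupported (Gam S) :=
  le_antisymm (algSpanChip_le_colSupported_Gam hS) (colSupported_Gam_le_algSpanChip S)

end NSS
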